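/- Define g(s) = σ − (L_f + L_G)·s for s ∈ ℝ. Let T ≥ 0 and let φ : [0, T] → ℝⁿ be differentiable with φ(0) = 0, with (L_f + L_G)·‖φ(t)‖ ≤ σ for all t ∈ [0, T], and suppose there exists v : [0, T] → ℝⁿ with ‖v(t)‖ ≤ 1 and v(t) ∈ Im(G₀) for all t, such that φ′(t) = f₀ + g(‖φ(t)‖)·v(t) for every t ∈ [0, T]. Then for every consistent pair (f̂, Ĝ) there exists u : [0, T] → ℝᵐ with ‖u(t)‖ ≤ 1 for all t, such that φ′(t) = f̂(φ(t)) + Ĝ(φ(t))·u(t) for every t ∈ [0, T]. -/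

import Mathlib

open Matrix Set

noncomputable def matOpNorm {n m : ℕ} (M : Matrix (Fin n) (Fin m) ℝ) : ℝ :=
  ‖LinearMap.toContinuousLinearMap (Matrix.toEuclideanLin M)‖

noncomputable def appMat {n m : ℕ} (M : Matrix (Fin n) (Fin m) ℝ)
    (v : EuclideanSpace ℝ (Fin m)) : EuclideanSpace ℝ (Fin n) :=
  Matrix.toEuclideanLin M v

noncomputable def colSpace {n m : ℕ} (M : Matrix (Fin n) (Fin m) ℝ) :
    Submodule ℝ (EuclideanSpace ℝ (Fin n)) :=
  LinearMap.range (Matrix.toEuclideanLin M)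

noncomputable def minSV {n m : ℕ} (M : Matrix (Fin n) (Fin m) ℝ) : ℝ :=
  Real.sqrt (sInf {μ : ℝ | μ ≠ 0 ∧
    ∃ i, (Matrix.isHermitian_conjTranspose_mul_self M).eigenvalues i = μ})

/-- A pair `(fh, Gh)` consistent with the prior knowledge of the dynamics. -/
structure Consistent {n m : ℕ} (R : Matrix (Fin n) (Fin m) ℝ) (Lf LG : ℝ)
    (f₀ : EuclideanSpace ℝ (Fin n)) (G₀ : Matrix (Fin n) (Fin m) ℝ)
    (fh : EuclideanSpace ℝ (Fin n) → EuclideanSpace ℝ (Fin n))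
    (Gh : EuclideanSpace ℝ (Fin n) → Matrix (Fin n) (Fin m) ℝ) : Prop where
  lipf : ∀ y z, ‖fh y - fh z‖ ≤ Lf * ‖y - z‖
  lipG : ∀ y z, matOpNorm (Gh y - Gh z) ≤ LG * ‖y - z‖
  f_zero : fh 0 = f₀
  G_zero : Gh 0 = G₀
  f_im : ∀ y, fh y ∈ colSpace R
  factor : ∃ Hh : EuclideanSpace ℝ (Fin n) → Matrix (Fin m) (Fin m) ℝ,
    IsUnit (Hh 0) ∧ ∀ y, Gh y = R * Hh y

/-- The guaranteed velocity set at `x`. -/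
noncomputable def GVS {n m : ℕ} (R : Matrix (Fin n) (Fin m) ℝ) (Lf LG : ℝ)
    (f₀ : EuclideanSpace ℝ (Fin n)) (G₀ : Matrix (Fin n) (Fin m) ℝ)
    (x : EuclideanSpace ℝ (Fin n)) : Set (EuclideanSpace ℝ (Fin n)) :=
  ⋂ (fh : EuclideanSpace ℝ (Fin n) → EuclideanSpace ℝ (Fin n))
    (Gh : EuclideanSpace ℝ (Fin n) → Matrix (Fin n) (Fin m) ℝ)
    (_ : Consistent R Lf LG f₀ G₀ fh Gh),
      {w | ∃ u : EuclideanSpace ℝ (Fin m), ‖u‖ ≤ 1 ∧ w = fh x + appMat (Gh x) u}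

/-!
Fix `x = φ t` and write `Gh x = G₀ + Δ`. The Lipschitz bounds give `‖Δ‖ ≤ L_G ‖x‖ < σ` and, for the
velocity `w = φ' t - fh x` that the control must produce, `‖w‖ ≤ L_f ‖x‖ + g ‖x‖ = σ - L_G ‖x‖`;
the factorisations through `R` put `w` and the range of `Δ` inside `Im G₀`. On `(ker G₀)ᗮ` the
smallest nonzero singular value gives `‖G₀ u‖ ≥ σ ‖u‖`, hence `‖(G₀ + Δ) u‖ ≥ (σ - L_G ‖x‖) ‖u‖`.
So `G₀ + Δ` maps `(ker G₀)ᗮ` injectively, and by equality of dimensions onto `Im G₀`; the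
preimage `u` of `w` then has `‖u‖ ≤ 1`.
-/

open Module InnerProductSpace

theorem LinearMap.IsSymmetric.inner_apply_self_eq_sum {E ι : Type*} [NormedAddCommGroup E]
    [InnerProductSpace ℝ E] [Fintype ι] {T : E →ₗ[ℝ] E} (hT : T.IsSymmetric)
    (e : OrthonormalBasis ι ℝ E) {μ : ι → ℝ} (he : ∀ i, T (e i) = μ i • e i) (u : E) :
    ⟪u, T u⟫_ℝ = ∑ i, μ i * ⟪e i, u⟫_ℝ ^ 2 := by
  rw [← e.sum_inner_mul_inner u (T u)]
  refine Finset.sum_congr rfl fun i _ => ?_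
  rw [← hT, he, real_inner_smul_left, real_inner_comm u]
  ring

theorem Matrix.IsHermitian.toEuclideanLin_eigenvectorBasis {ι : Type*} [Fintype ι]
    [DecidableEq ι] {B : Matrix ι ι ℝ} (hB : B.IsHermitian) (i : ι) :
    toEuclideanLin B (hB.eigenvectorBasis i) = hB.eigenvalues i • hB.eigenvectorBasis i := by
  rw [toLpLin_apply, hB.mulVec_eigenvectorBasis]
  rfl

section Perturbation

variable {E F : Type*} [NormedAddCommGroup E] [InnerProductSpace ℝ E] [FiniteDimensional ℝ E]
  [NormedAddCommGroup F] [InnerProductSpace ℝ F]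

theorem LinearMap.finrank_orthogonal_ker (A : E →ₗ[ℝ] F) :
    finrank ℝ (LinearMap.ker A)ᗮ = finrank ℝ (LinearMap.range A) := by
  have := (LinearMap.ker A).finrank_add_finrank_orthogonal
  have := A.finrank_range_add_finrank_ker
  omega

theorem LinearMap.exists_mem_apply_eq_of_mul_norm_le [FiniteDimensional ℝ F] {B : E →ₗ[ℝ] F}
    {K : Submodule ℝ E} {V : Submodule ℝ F} (hKV : finrank ℝ K = finrank ℝ V)
    (hmaps : ∀ k ∈ K, B k ∈ V) {c : ℝ} (hc : 0 < c) (hbound : ∀ k ∈ K, c * ‖k‖ ≤ ‖B k‖)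
    {y : F} (hy : y ∈ V) : ∃ k ∈ K, B k = y ∧ c * ‖k‖ ≤ ‖y‖ := by
  set B' : K →ₗ[ℝ] V := B.restrict hmaps
  have hinj : Function.Injective B' := by
    refine (injective_iff_map_eq_zero B').mpr fun k hk => ?_
    have hBk : B k = 0 := congrArg Subtype.val hk
    have : c * ‖(k : E)‖ ≤ 0 := by simpa [hBk] using hbound k k.2
    exact Subtype.ext (norm_eq_zero.mp (by nlinarith [norm_nonneg (k : E)]))
  obtain ⟨k, hk⟩ := (LinearMap.injective_iff_surjective_of_finrank_eq_finrank hKV).mp hinj ⟨y, hy⟩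
  have hBk : B k = y := congrArg Subtype.val hk
  exact ⟨k, k.2, hBk, hBk ▸ hbound k k.2⟩

theorem LinearMap.exists_norm_le_one_add_apply_eq [FiniteDimensional ℝ F] {A Δ : E →ₗ[ℝ] F}
    {σ δ : ℝ} (hA : ∀ k ∈ (LinearMap.ker A)ᗮ, σ * ‖k‖ ≤ ‖A k‖) (hΔ : ∀ x, ‖Δ x‖ ≤ δ * ‖x‖)
    (hδσ : δ < σ) (hΔA : LinearMap.range Δ ≤ LinearMap.range A) {w : F}
    (hw : w ∈ LinearMap.range A) (hwσ : ‖w‖ ≤ σ - δ) :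
    ∃ u, ‖u‖ ≤ 1 ∧ A u + Δ u = w := by
  have hbound : ∀ k ∈ (LinearMap.ker A)ᗮ, (σ - δ) * ‖k‖ ≤ ‖(A + Δ) k‖ := fun k hk =>
    calc (σ - δ) * ‖k‖ ≤ ‖A k‖ - ‖Δ k‖ := by nlinarith [hA k hk, hΔ k]
      _ ≤ ‖A k + Δ k‖ := norm_sub_le_norm_add _ _
  have hmaps : ∀ k ∈ (LinearMap.ker A)ᗮ, (A + Δ) k ∈ LinearMap.range A := fun k _ =>
    add_mem (LinearMap.mem_range_self A k) (hΔA (LinearMap.mem_range_self Δ k))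
  obtain ⟨u, -, hu, hun⟩ := exists_mem_apply_eq_of_mul_norm_le A.finrank_orthogonal_ker hmaps
    (sub_pos.mpr hδσ) hbound hw
  exact ⟨u, by nlinarith [norm_nonneg u], hu⟩

end Perturbation

section SingularValue

variable {n m : ℕ} {A : Matrix (Fin n) (Fin m) ℝ}

theorem Matrix.inner_toEuclideanLin_conjTranspose_mul_self (u : EuclideanSpace ℝ (Fin m)) :
    ⟪u, toEuclideanLin (Aᴴ * A) u⟫_ℝ = ‖toEuclideanLin A u‖ ^ 2 := by
  have : toEuclideanLin (Aᴴ * A) u = A.toEuclideanLin.adjoint (toEuclideanLin A u) := by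
    rw [← toEuclideanLin_conjTranspose_eq_adjoint]
    simp [toLpLin_apply, mulVec_mulVec]
  rw [this, LinearMap.adjoint_inner_right, real_inner_self_eq_norm_sq]

theorem Matrix.IsHermitian.norm_toEuclideanLin_sq_eq_sum (hA : (Aᴴ * A).IsHermitian)
    (u : EuclideanSpace ℝ (Fin m)) :
    ‖toEuclideanLin A u‖ ^ 2 = ∑ i, hA.eigenvalues i * ⟪hA.eigenvectorBasis i, u⟫_ℝ ^ 2 := by
  rw [← Matrix.inner_toEuclideanLin_conjTranspose_mul_self,
    (isSymmetric_toEuclideanLin_iff.mpr hA).inner_apply_self_eq_sum hA.eigenvectorBasis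
      hA.toEuclideanLin_eigenvectorBasis]

theorem Matrix.IsHermitian.inner_eigenvectorBasis_eq_zero (hA : (Aᴴ * A).IsHermitian)
    {i : Fin m} (hi : hA.eigenvalues i = 0) {u : EuclideanSpace ℝ (Fin m)}
    (hu : u ∈ (LinearMap.ker (toEuclideanLin A))ᗮ) : ⟪hA.eigenvectorBasis i, u⟫_ℝ = 0 := by
  refine Submodule.inner_right_of_mem_orthogonal (LinearMap.mem_ker.mpr ?_) hu
  rw [← norm_eq_zero, ← sq_eq_zero_iff, ← Matrix.inner_toEuclideanLin_conjTranspose_mul_self,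
    hA.toEuclideanLin_eigenvectorBasis, hi, zero_smul, inner_zero_right]

variable (A) in
def nonzeroGramEigenvalues : Set ℝ :=
  {μ : ℝ | μ ≠ 0 ∧ ∃ i, (isHermitian_conjTranspose_mul_self A).eigenvalues i = μ}

theorem nonzeroGramEigenvalues_finite : (nonzeroGramEigenvalues A).Finite :=
  (Set.finite_range _).subset fun _ h => h.2

theorem nonneg_of_mem_nonzeroGramEigenvalues {μ : ℝ} (hμ : μ ∈ nonzeroGramEigenvalues A) :
    0 ≤ μ := by
  obtain ⟨-, i, rfl⟩ := hμ
  exact eigenvalues_conjTranspose_mul_self_nonneg A i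

theorem minSV_eq_sqrt_sInf : minSV A = √(sInf (nonzeroGramEigenvalues A)) := rfl

theorem Matrix.IsHermitian.sq_minSV_le_eigenvalues (hA : (Aᴴ * A).IsHermitian) {i : Fin m}
    (hi : hA.eigenvalues i ≠ 0) : minSV A ^ 2 ≤ hA.eigenvalues i := by
  rw [minSV_eq_sqrt_sInf,
    Real.sq_sqrt (Real.sInf_nonneg fun _ => nonneg_of_mem_nonzeroGramEigenvalues)]
  exact csInf_le nonzeroGramEigenvalues_finite.bddBelow ⟨hi, i, rfl⟩

theorem minSV_mul_norm_le {u : EuclideanSpace ℝ (Fin m)}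
    (hu : u ∈ (LinearMap.ker (toEuclideanLin A))ᗮ) : minSV A * ‖u‖ ≤ ‖toEuclideanLin A u‖ := by
  have hA := isHermitian_conjTranspose_mul_self A
  refine (pow_le_pow_iff_left₀ (mul_nonneg (Real.sqrt_nonneg _) (norm_nonneg u)) (norm_nonneg _)
    two_ne_zero).mp ?_
  rw [mul_pow, hA.norm_toEuclideanLin_sq_eq_sum, ← hA.eigenvectorBasis.sum_sq_norm_inner_right,
    Finset.mul_sum]
  refine Finset.sum_le_sum fun i _ => ?_
  rw [Real.norm_eq_abs, sq_abs]
  by_cases hi : hA.eigenvalues i = 0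
  · rw [hA.inner_eigenvectorBasis_eq_zero hi hu]
    simp
  · exact mul_le_mul_of_nonneg_right (hA.sq_minSV_le_eigenvalues hi) (sq_nonneg _)

theorem minSV_pos (h : A ≠ 0) : 0 < minSV A := by
  have hA := isHermitian_conjTranspose_mul_self A
  obtain ⟨i, hi⟩ : ∃ i, hA.eigenvalues i ≠ 0 := by
    by_contra! hzero
    exact h (conjTranspose_mul_self_eq_zero.mp (hA.eigenvalues_eq_zero_iff.mp (funext hzero)))
  have hmem := Set.Nonempty.csInf_mem (s := nonzeroGramEigenvalues A) ⟨_, hi, i, rfl⟩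
    nonzeroGramEigenvalues_finite
  exact Real.sqrt_pos.mpr ((nonneg_of_mem_nonzeroGramEigenvalues hmem).lt_of_ne hmem.1.symm)

end SingularValue

section MatrixApplication

variable {n m : ℕ}

theorem norm_appMat_le (M : Matrix (Fin n) (Fin m) ℝ) (v : EuclideanSpace ℝ (Fin m)) :
    ‖appMat M v‖ ≤ matOpNorm M * ‖v‖ :=
  (LinearMap.toContinuousLinearMap (toEuclideanLin M)).le_opNorm v

theorem colSpace_mul_le (R : Matrix (Fin n) (Fin m) ℝ) (B : Matrix (Fin m) (Fin m) ℝ) :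
    colSpace (R * B) ≤ colSpace R := by
  rintro _ ⟨u, rfl⟩
  exact ⟨toEuclideanLin B u, by simp [toLpLin_apply, mulVec_mulVec]⟩

theorem colSpace_mul_of_isUnit (R : Matrix (Fin n) (Fin m) ℝ) {H : Matrix (Fin m) (Fin m) ℝ}
    (hH : IsUnit H) : colSpace (R * H) = colSpace R := by
  refine le_antisymm (colSpace_mul_le R H) ?_
  obtain ⟨U, rfl⟩ := hH
  have := colSpace_mul_le (R * U.val) U⁻¹.val
  rwa [Matrix.mul_assoc, Units.mul_inv, Matrix.mul_one] at this

end MatrixApplication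

namespace Consistent

variable {n m : ℕ} {R G₀ : Matrix (Fin n) (Fin m) ℝ} {Lf LG : ℝ} {f₀ : EuclideanSpace ℝ (Fin n)}
  {fh : EuclideanSpace ℝ (Fin n) → EuclideanSpace ℝ (Fin n)}
  {Gh : EuclideanSpace ℝ (Fin n) → Matrix (Fin n) (Fin m) ℝ}

theorem norm_sub_f₀_le (h : Consistent R Lf LG f₀ G₀ fh Gh) (x : EuclideanSpace ℝ (Fin n)) :
    ‖fh x - f₀‖ ≤ Lf * ‖x‖ := by
  simpa [h.f_zero] using h.lipf x 0

theorem norm_appMat_sub_le (h : Consistent R Lf LG f₀ G₀ fh Gh) (x : EuclideanSpace ℝ (Fin n))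
    (u : EuclideanSpace ℝ (Fin m)) : ‖appMat (Gh x - G₀) u‖ ≤ LG * ‖x‖ * ‖u‖ := by
  have hop : matOpNorm (Gh x - G₀) ≤ LG * ‖x‖ := by simpa [h.G_zero] using h.lipG x 0
  exact (norm_appMat_le _ u).trans (mul_le_mul_of_nonneg_right hop (norm_nonneg u))

theorem colSpace_sub_le (h : Consistent R Lf LG f₀ G₀ fh Gh) {H₀ : Matrix (Fin m) (Fin m) ℝ}
    (hG₀ : G₀ = R * H₀) (x : EuclideanSpace ℝ (Fin n)) : colSpace (Gh x - G₀) ≤ colSpace R := by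
  obtain ⟨Hh, -, hGh⟩ := h.factor
  rw [hGh, hG₀, ← Matrix.mul_sub]
  exact colSpace_mul_le R _

end Consistent

theorem add_smul_mem_GVS {n m : ℕ} {R : Matrix (Fin n) (Fin m) ℝ} {Lf LG : ℝ} (hLf : 0 < Lf)
    {f₀ : EuclideanSpace ℝ (Fin n)} (hf₀ : f₀ ∈ colSpace R) {H₀ : Matrix (Fin m) (Fin m) ℝ}
    (hH₀ : IsUnit H₀) {G₀ : Matrix (Fin n) (Fin m) ℝ} (hG₀fac : G₀ = R * H₀) (hG₀ : G₀ ≠ 0)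
    {x : EuclideanSpace ℝ (Fin n)} (hx : (Lf + LG) * ‖x‖ ≤ minSV G₀)
    {v : EuclideanSpace ℝ (Fin n)} (hv : ‖v‖ ≤ 1) (hvG : v ∈ colSpace G₀) :
    f₀ + (minSV G₀ - (Lf + LG) * ‖x‖) • v ∈ GVS R Lf LG f₀ G₀ x := by
  simp only [GVS, Set.mem_iInter]
  intro fh Gh h
  set σ := minSV G₀
  have hσ : 0 < σ := minSV_pos hG₀
  have hcol : colSpace G₀ = colSpace R := hG₀fac ▸ colSpace_mul_of_isUnit R hH₀
  set w := f₀ + (σ - (Lf + LG) * ‖x‖) • v - fh x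
  have hw : w ∈ colSpace G₀ := by
    rw [hcol] at hvG ⊢
    exact sub_mem (add_mem hf₀ (Submodule.smul_mem _ _ hvG)) (h.f_im x)
  have hg : 0 ≤ σ - (Lf + LG) * ‖x‖ := sub_nonneg.mpr hx
  have hwσ : ‖w‖ ≤ σ - LG * ‖x‖ :=
    calc ‖w‖ = ‖(σ - (Lf + LG) * ‖x‖) • v - (fh x - f₀)‖ := by congr 1; simp only [w]; abel
      _ ≤ ‖(σ - (Lf + LG) * ‖x‖) • v‖ + ‖fh x - f₀‖ := norm_sub_le _ _
      _ = (σ - (Lf + LG) * ‖x‖) * ‖v‖ + ‖fh x - f₀‖ := by rw [norm_smul, Real.norm_of_nonneg hg]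
      _ ≤ (σ - (Lf + LG) * ‖x‖) * 1 + Lf * ‖x‖ :=
          add_le_add (mul_le_mul_of_nonneg_left hv hg) (h.norm_sub_f₀_le x)
      _ = σ - LG * ‖x‖ := by ring
  have hδσ : LG * ‖x‖ < σ := by
    rcases (norm_nonneg x).eq_or_lt with hx0 | hx0
    · rwa [← hx0, mul_zero]
    · calc LG * ‖x‖ < (Lf + LG) * ‖x‖ := by nlinarith
        _ ≤ σ := hx
  have hΔ : colSpace (Gh x - G₀) ≤ colSpace G₀ := hcol ▸ h.colSpace_sub_le hG₀fac x
  obtain ⟨u, hu, hGu⟩ := LinearMap.exists_norm_le_one_add_apply_eq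
    (fun k hk => minSV_mul_norm_le hk) (h.norm_appMat_sub_le x) hδσ hΔ hw hwσ
  refine ⟨u, hu, ?_⟩
  have hGh : appMat (Gh x) u = w := by
    rw [← hGu, ← LinearMap.add_apply, ← map_add, add_sub_cancel]
    rfl
  rw [hGh]
  simp only [w]
  abel

theorem theorem3_ball_system_general {n m : ℕ} (R : Matrix (Fin n) (Fin m) ℝ)
    (Lf LG : ℝ) (hLf : 0 < Lf)
    (f₀ : EuclideanSpace ℝ (Fin n)) (hf₀ : f₀ ∈ colSpace R)
    (H₀ : Matrix (Fin m) (Fin m) ℝ) (hH₀ : IsUnit H₀)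
    (G₀ : Matrix (Fin n) (Fin m) ℝ) (hG₀fac : G₀ = R * H₀) (hG₀ : G₀ ≠ 0)
    (g : ℝ → ℝ) (hg : ∀ s, g s = minSV G₀ - (Lf + LG) * s)
    (T : ℝ)
    (φ φ' : ℝ → EuclideanSpace ℝ (Fin n))
    (hstay : ∀ t ∈ Set.Icc (0 : ℝ) T, (Lf + LG) * ‖φ t‖ ≤ minSV G₀)
    (v : ℝ → EuclideanSpace ℝ (Fin n))
    (hv : ∀ t ∈ Set.Icc (0 : ℝ) T, ‖v t‖ ≤ 1 ∧ v t ∈ colSpace G₀)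
    (hform : ∀ t ∈ Set.Icc (0 : ℝ) T, φ' t = f₀ + g ‖φ t‖ • v t) :
    ∀ fh Gh, Consistent R Lf LG f₀ G₀ fh Gh →
      ∃ u : ℝ → EuclideanSpace ℝ (Fin m),
        ∀ t ∈ Set.Icc (0 : ℝ) T,
          ‖u t‖ ≤ 1 ∧ φ' t = fh (φ t) + appMat (Gh (φ t)) (u t) := by
  intro fh Gh h
  have hvel : ∀ t ∈ Set.Icc (0 : ℝ) T,
      ∃ u, ‖u‖ ≤ 1 ∧ φ' t = fh (φ t) + appMat (Gh (φ t)) u := fun t ht => by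
    have hmem := add_smul_mem_GVS hLf hf₀ hH₀ hG₀fac hG₀ (hstay t ht) (hv t ht).1 (hv t ht).2
    rw [← hg, ← hform t ht] at hmem
    simp only [GVS, Set.mem_iInter] at hmem
    exact hmem fh Gh h
  choose! u hu using hvel
  exact ⟨u, hu⟩

/-- **Theorem 3.** Every trajectory of the ball system
`ẋ = f₀ + g(‖x‖)v`, `v ∈ 𝔹 ∩ Im G₀`, with `g(s) = σ − (L_f + L_G)s`, is a trajectory
of every system consistent with the prior knowledge, realized by admissible
controls. -/
theorem theorem3_ball_system {n m : ℕ} (R : Matrix (Fin n) (Fin m) ℝ)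
    (Lf LG : ℝ) (hLf : 0 < Lf) (hLG : 0 < LG)
    (f₀ : EuclideanSpace ℝ (Fin n)) (hf₀ : f₀ ∈ colSpace R)
    (H₀ : Matrix (Fin m) (Fin m) ℝ) (hH₀ : IsUnit H₀)
    (G₀ : Matrix (Fin n) (Fin m) ℝ) (hG₀fac : G₀ = R * H₀) (hG₀ : G₀ ≠ 0)
    (g : ℝ → ℝ) (hg : ∀ s, g s = minSV G₀ - (Lf + LG) * s)
    (T : ℝ) (hT : 0 ≤ T)
    (φ φ' : ℝ → EuclideanSpace ℝ (Fin n)) (hφ0 : φ 0 = 0)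
    (hstay : ∀ t ∈ Set.Icc (0 : ℝ) T, (Lf + LG) * ‖φ t‖ ≤ minSV G₀)
    (hderiv : ∀ t ∈ Set.Icc (0 : ℝ) T, HasDerivAt φ (φ' t) t)
    (v : ℝ → EuclideanSpace ℝ (Fin n))
    (hv : ∀ t ∈ Set.Icc (0 : ℝ) T, ‖v t‖ ≤ 1 ∧ v t ∈ colSpace G₀)
    (hform : ∀ t ∈ Set.Icc (0 : ℝ) T, φ' t = f₀ + g ‖φ t‖ • v t) :
    ∀ fh Gh, Consistent R Lf LG f₀ G₀ fh Gh →
      ∃ u : ℝ → EuclideanSpace ℝ (Fin m),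
        ∀ t ∈ Set.Icc (0 : ℝ) T,
          ‖u t‖ ≤ 1 ∧ φ' t = fh (φ t) + appMat (Gh (φ t)) (u t) :=
  theorem3_ball_system_general R Lf LG hLf f₀ hf₀ H₀ hH₀ G₀ hG₀fac hG₀ g hg T φ φ' hstay v hv hform
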